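/- arXiv:1203.1482 — 2 statements merged into one kernel-verified Lean document; each statement's English description precedes it below -/
import Mathlib

section
/- Let n and k be integers with 1 ≤ k < n/2. Then for all real x one has the polynomial identity 2(x)_k(x)_{n−k} − (x−1)_k(x+1)_{n−k} − (x−1)_{n−k}(x+1)_k = (x)_{k−1} (x+1)_{n−k−2} (−A_k x + B_k), where A_k = n(n−1) − 4k(n−k) and B_k = n(n−1) − 2k(n−k). -/
/-- Rising factorial (Pochhammer symbol): `asc x k = x (x+1) ⋯ (x+k-1)`. -/
noncomputable def asc (x : ℝ) (k : ℕ) : ℝ := (ascPochhammer ℝ k).eval x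

/-!
Both sides carry the common factor `(x)_{k-1} (x+1)_{n-k-2}`: peeling the few outer factors
off each rising factorial in terms of `(x)_{k-1}` and `(x+1)_{n-k-2}`, the identity reduces to
one between polynomials of degree two in `x`.
-/

lemma asc_succ (x : ℝ) (k : ℕ) : asc x (k + 1) = asc x k * (x + k) :=
  ascPochhammer_succ_eval k x

lemma asc_succ' (x : ℝ) (k : ℕ) : asc x (k + 1) = x * asc (x + 1) k := by
  simp [asc, ascPochhammer_succ_left, Polynomial.eval_comp]

lemma mul_asc_add_one (x : ℝ) (k : ℕ) : x * asc (x + 1) k = asc x k * (x + k) := by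
  rw [← asc_succ', asc_succ]

lemma asc_sub_one_succ (x : ℝ) (k : ℕ) : asc (x - 1) (k + 1) = (x - 1) * asc x k := by
  rw [asc_succ', sub_add_cancel]

/-- The identity with `k = a + 1` and `n - k = m + 2`. -/
lemma asc_identity (a m : ℕ) (x : ℝ) :
    2 * asc x (a + 1) * asc x (m + 2) - asc (x - 1) (a + 1) * asc (x + 1) (m + 2)
      - asc (x - 1) (m + 2) * asc (x + 1) (a + 1) =
    asc x a * asc (x + 1) m *
      (-(((a + m + 3) * (a + m + 2) : ℝ) - 4 * (a + 1) * (m + 2)) * x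
        + (((a + m + 3) * (a + m + 2) : ℝ) - 2 * (a + 1) * (m + 2))) := by
  have hQ : asc (x + 1) (m + 1) = asc (x + 1) m * (x + m + 1) := by
    rw [asc_succ]; ring
  have h₁ : asc x (m + 2) = x * asc (x + 1) m * (x + m + 1) := by
    rw [asc_succ', hQ]; ring
  have h₂ : asc (x + 1) (m + 2) = asc (x + 1) m * (x + m + 1) * (x + m + 2) := by
    rw [asc_succ, hQ]; push_cast; ring
  have h₃ : asc (x - 1) (m + 2) = (x - 1) * x * asc (x + 1) m := by
    rw [asc_sub_one_succ, asc_succ']; ring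
  have h₄ : x * asc (x + 1) (a + 1) = asc x a * (x + a) * (x + a + 1) := by
    rw [mul_asc_add_one, asc_succ]; push_cast; ring
  rw [asc_succ x a, asc_sub_one_succ, h₁, h₂, h₃]
  linear_combination (1 - x) * asc (x + 1) m * h₄

theorem Phi_k_identity (n k : ℕ) (hk : 1 ≤ k) (hkn : 2 * k < n) (x : ℝ) :
    2 * asc x k * asc x (n - k) - asc (x - 1) k * asc (x + 1) (n - k)
      - asc (x - 1) (n - k) * asc (x + 1) k =
    asc x (k - 1) * asc (x + 1) (n - k - 2) *
      (-((n * (n - 1) : ℝ) - 4 * k * (n - k : ℕ)) * x + ((n * (n - 1) : ℝ) - 2 * k * (n - k : ℕ))) := by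
  obtain ⟨a, rfl⟩ : ∃ a, k = a + 1 := ⟨k - 1, by omega⟩
  obtain ⟨m, rfl⟩ : ∃ m, n = a + m + 3 := ⟨n - a - 3, by omega⟩
  rw [show a + m + 3 - (a + 1) = m + 2 by omega, Nat.add_sub_cancel, Nat.add_sub_cancel,
    asc_identity]
  push_cast
  ring
end

section
/- Let n ≥ 3 and let f_0,…,f_n be real numbers. For each m = 1,2,…,n−2, the coefficient p_n(m) of x^m in the polynomial P_n(x) satisfies p_n(m) = −n(n−1) S^{n−1}_{m+1} f_0 f_n + Σ_{1 ≤ k ≤ n/2} f_k f_{n−k} binom(n,k) Σ_{i=0}^m S^{k−1}_i ( B_k S^{n−k−1}_{m−i+1} − A_k S^{n−k−1}_{m−i} ), where A_k = n(n−1) − 4k(n−k) and B_k = n(n−1) − 2k(n−k) for k < n/2, and, when n is even, A_{n/2} = −n/2 and B_{n/2} = n(n−2)/4. -/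
/-!
Multiplying by `x` turns each bracket of `P_n` into a product of rising factorials: from
`x (x+1)_a = (x)_a (x+a)` and `(x-1)_{b+1} = (x-1) (x)_b` one gets
`x [(x)_{a+1} (x)_{b+1} - (x+1)_{a+1} (x-1)_{b+1}] = (x)_{a+1} (x)_b ((b-a) x + a + 1)`.
The summands `k` and `n - k` of `P_n` carry the same weight `f_k f_{n-k} C(n,k)`, so pairing
them gives
`x P_n(x) = -n(n-1) f_0 f_n (x)_{n-1}`
`  + Σ_{1 ≤ k ≤ n/2} f_k f_{n-k} C(n,k) (x)_{k-1} (x)_{n-k-1} (B_k - A_k x)`;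
for even `n` the middle summand has no partner, which is why `A_{n/2}` and `B_{n/2}` are half the
generic values. The coefficient of `x^{m+1}` is then a Cauchy product, whose last term vanishes
because `(x)_{n-k-1}` has no constant term when `n - k - 1 ≥ 1`.
-/

open Polynomial

/-- The polynomial `P_n(x) = Σ_{k=0}^n f_k f_{n-k} C(n,k) [(x)_k (x)_{n-k} - (x+1)_k (x-1)_{n-k}]`,
where `(x)_k` is the rising factorial. -/
noncomputable def Ppoly (n : ℕ) (f : ℕ → ℝ) : Polynomial ℝ :=
  ∑ k ∈ Finset.range (n + 1),
    C (f k * f (n - k) * (n.choose k : ℝ)) *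
      (ascPochhammer ℝ k * ascPochhammer ℝ (n - k) -
        (ascPochhammer ℝ k).comp (X + 1) * (ascPochhammer ℝ (n - k)).comp (X - 1))

/-- Unsigned Stirling number of the first kind `S^p_q`:
the coefficient of `x^q` in the rising factorial `(x)_p`. -/
noncomputable def Stir (p q : ℕ) : ℝ := (ascPochhammer ℝ p).coeff q

/-- `A_k = n(n-1) - 4k(n-k)` for `k < n/2`, and `A_{n/2} = -n/2` for even `n`. -/
noncomputable def Acoef (n k : ℕ) : ℝ :=
  if 2 * k = n then -(n : ℝ) / 2 else (n : ℝ) * ((n : ℝ) - 1) - 4 * (k : ℝ) * ((n : ℝ) - (k : ℝ))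

/-- `B_k = n(n-1) - 2k(n-k)` for `k < n/2`, and `B_{n/2} = n(n-2)/4` for even `n`. -/
noncomputable def Bcoef (n k : ℕ) : ℝ :=
  if 2 * k = n then (n : ℝ) * ((n : ℝ) - 2) / 4
  else (n : ℝ) * ((n : ℝ) - 1) - 2 * (k : ℝ) * ((n : ℝ) - (k : ℝ))

open Finset

theorem sum_range_succ_eq_sum_fold {M : Type*} [AddCommMonoid M] (n : ℕ) (g : ℕ → M) :
    ∑ k ∈ range (n + 1), g k =
      ∑ k ∈ range (n / 2 + 1), if 2 * k = n then g k else g k + g (n - k) := by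
  have hsplit : ∀ k, (if 2 * k = n then g k else g k + g (n - k)) =
      g k + if ¬2 * k = n then g (n - k) else 0 := by
    intro k; split_ifs <;> simp
  have hfilter : {k ∈ range (n / 2 + 1) | ¬2 * k = n} = range (n - n / 2) := by
    ext k; simp only [mem_filter, mem_range]; omega
  have hreflect : ∑ k ∈ range (n - n / 2), g (n - k) = ∑ k ∈ Ico (n / 2 + 1) (n + 1), g k := by
    rw [range_eq_Ico, sum_Ico_reflect g 0 (by omega)]
    congr 2; omega
  simp_rw [hsplit, sum_add_distrib, ← sum_filter, hfilter, hreflect,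
    sum_range_add_sum_Ico g (by omega : n / 2 + 1 ≤ n + 1)]

section CommRing

variable (R : Type*) [CommRing R]

noncomputable def pochDiff (a b : ℕ) : R[X] :=
  ascPochhammer R a * ascPochhammer R b -
    (ascPochhammer R a).comp (X + 1) * (ascPochhammer R b).comp (X - 1)

theorem ascPochhammer_succ_comp_X_sub_one (n : ℕ) :
    (ascPochhammer R (n + 1)).comp (X - 1) = (X - 1) * ascPochhammer R n := by
  rw [ascPochhammer_succ_left, mul_comp, X_comp, comp_assoc]
  simp

theorem X_mul_ascPochhammer_comp_X_add_one (n : ℕ) :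
    X * (ascPochhammer R n).comp (X + 1) = ascPochhammer R n * (X + (n : R[X])) := by
  rw [← ascPochhammer_succ_left, ascPochhammer_succ_right]

theorem X_mul_pochDiff_succ_succ (a b : ℕ) :
    X * pochDiff R (a + 1) (b + 1) =
      ascPochhammer R (a + 1) * ascPochhammer R b *
        (((b : R[X]) - (a : R[X])) * X + ((a : R[X]) + 1)) := by
  have h1 := X_mul_ascPochhammer_comp_X_add_one R (a + 1)
  have h2 := ascPochhammer_succ_comp_X_sub_one R b
  have h3 := ascPochhammer_succ_right R b
  push_cast at h1
  rw [pochDiff]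
  linear_combination (-(ascPochhammer R (b + 1)).comp (X - 1)) * h1 +
    (-(ascPochhammer R (a + 1) * (X + (a : R[X]) + 1))) * h2 +
    (X * ascPochhammer R (a + 1)) * h3

theorem X_mul_pochDiff_succ_add_swap (a b : ℕ) :
    X * (pochDiff R (a + 1) (b + 1) + pochDiff R (b + 1) (a + 1)) =
      ascPochhammer R a * ascPochhammer R b *
        ((a : R[X]) ^ 2 + (b : R[X]) ^ 2 + (a : R[X]) + (b : R[X]) -
          (((a : R[X]) - (b : R[X])) ^ 2 - (a : R[X]) - (b : R[X]) - 2) * X) := by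
  linear_combination X_mul_pochDiff_succ_succ R a b + X_mul_pochDiff_succ_succ R b a +
    (ascPochhammer R b * (((b : R[X]) - (a : R[X])) * X + (a : R[X]) + 1)) *
      ascPochhammer_succ_right R a +
    (ascPochhammer R a * (((a : R[X]) - (b : R[X])) * X + (b : R[X]) + 1)) *
      ascPochhammer_succ_right R b

theorem X_mul_pochDiff_succ_self (a : ℕ) :
    X * pochDiff R (a + 1) (a + 1) =
      ascPochhammer R a * ascPochhammer R a *
        ((a : R[X]) ^ 2 + (a : R[X]) + ((a : R[X]) + 1) * X) := by
  linear_combination X_mul_pochDiff_succ_succ R a a +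
    (ascPochhammer R a * ((a : R[X]) + 1)) * ascPochhammer_succ_right R a

theorem X_mul_pochDiff_zero_add_swap (n : ℕ) :
    X * (pochDiff R 0 (n + 1) + pochDiff R (n + 1) 0) =
      -(((n : R[X]) + 1) * (n : R[X])) * ascPochhammer R n := by
  have h1 := X_mul_ascPochhammer_comp_X_add_one R (n + 1)
  push_cast at h1
  simp only [pochDiff, ascPochhammer_zero, one_mul, mul_one, one_comp]
  linear_combination -h1 - X * ascPochhammer_succ_comp_X_sub_one R n +
    (X - (n : R[X]) - 1) * ascPochhammer_succ_right R n

variable {R}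

theorem coeff_mul_mul_C_sub_C_mul_X_succ (p q : R[X]) (hq : q.coeff 0 = 0) (a b : R) (m : ℕ) :
    (p * q * (C b - C a * X)).coeff (m + 1) =
      ∑ i ∈ range (m + 1), p.coeff i * (b * q.coeff (m - i + 1) - a * q.coeff (m - i)) := by
  have hexpand : p * q * (C b - C a * X) = C b * (p * q) - C a * (X * (p * q)) := by ring
  have hshift :
      (p * q).coeff (m + 1) = ∑ i ∈ range (m + 1), p.coeff i * q.coeff (m - i + 1) := by
    rw [coeff_mul, Nat.sum_antidiagonal_eq_sum_range_succ_mk, sum_range_succ, Nat.sub_self, hq,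
      mul_zero, add_zero]
    refine sum_congr rfl fun i hi => ?_
    rw [Nat.sub_add_comm (by simpa [Nat.lt_succ_iff] using hi)]
  rw [hexpand, coeff_sub, coeff_C_mul, coeff_C_mul, coeff_X_mul, hshift, coeff_mul,
    Nat.sum_antidiagonal_eq_sum_range_succ_mk, mul_sum, mul_sum, ← sum_sub_distrib]
  refine sum_congr rfl fun i _ => by ring

end CommRing

theorem X_mul_pochDiff_folded (n k : ℕ) (hk : 1 ≤ k) (hkn : 2 * k ≤ n) :
    X * (if 2 * k = n then pochDiff ℝ k (n - k)
      else pochDiff ℝ k (n - k) + pochDiff ℝ (n - k) k) =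
      ascPochhammer ℝ (k - 1) * ascPochhammer ℝ (n - k - 1) *
        (C (Bcoef n k) - C (Acoef n k) * X) := by
  obtain ⟨a, rfl⟩ : ∃ a, k = a + 1 := ⟨k - 1, by omega⟩
  obtain ⟨b, rfl⟩ : ∃ b, n = a + b + 2 := ⟨n - a - 2, by omega⟩
  rw [show a + b + 2 - (a + 1) = b + 1 by omega, show b + 1 - 1 = b by omega, Nat.add_sub_cancel]
  by_cases hdiag : 2 * (a + 1) = a + b + 2
  · obtain rfl : a = b := by omega
    have hB : Bcoef (a + a + 2) (a + 1) = (a : ℝ) ^ 2 + a := by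
      rw [Bcoef, if_pos hdiag]; push_cast; ring
    have hA : Acoef (a + a + 2) (a + 1) = -((a : ℝ) + 1) := by
      rw [Acoef, if_pos hdiag]; push_cast; ring
    rw [if_pos hdiag, X_mul_pochDiff_succ_self, hA, hB]
    simp only [map_add, map_neg, map_pow, map_one, map_natCast]
    ring
  · have hB : Bcoef (a + b + 2) (a + 1) = (a : ℝ) ^ 2 + (b : ℝ) ^ 2 + a + b := by
      rw [Bcoef, if_neg hdiag]; push_cast; ring
    have hA : Acoef (a + b + 2) (a + 1) = ((a : ℝ) - b) ^ 2 - a - b - 2 := by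
      rw [Acoef, if_neg hdiag]; push_cast; ring
    rw [if_neg hdiag, X_mul_pochDiff_succ_add_swap, hA, hB]
    simp only [map_add, map_sub, map_pow, map_ofNat, map_natCast]

theorem X_mul_Ppoly (n : ℕ) (f : ℕ → ℝ) :
    X * Ppoly n f =
      C (-((n : ℝ) * ((n : ℝ) - 1)) * (f 0 * f n)) * ascPochhammer ℝ (n - 1) +
        ∑ k ∈ Icc 1 (n / 2), C (f k * f (n - k) * (n.choose k : ℝ)) *
          (ascPochhammer ℝ (k - 1) * ascPochhammer ℝ (n - k - 1) *
            (C (Bcoef n k) - C (Acoef n k) * X)) := by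
  rcases n with _ | n
  · simp [Ppoly]
  have hfold : Ppoly (n + 1) f = ∑ k ∈ range ((n + 1) / 2 + 1),
      C (f k * f (n + 1 - k) * ((n + 1).choose k : ℝ)) *
        (if 2 * k = n + 1 then pochDiff ℝ k (n + 1 - k)
          else pochDiff ℝ k (n + 1 - k) + pochDiff ℝ (n + 1 - k) k) := by
    rw [Ppoly, sum_range_succ_eq_sum_fold]
    refine sum_congr rfl fun k hk => ?_
    have hkn : k ≤ n + 1 := by simp only [mem_range] at hk; omega
    split_ifs
    · rfl
    · rw [Nat.sub_sub_self hkn, Nat.choose_symm hkn, mul_comm (f (n + 1 - k)), mul_add]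
      rfl
  rw [hfold, mul_sum, range_eq_Ico, sum_eq_sum_Ico_succ_bot (by omega), Ico_add_one_right_eq_Icc]
  congr 1
  · rw [if_neg (by omega), Nat.sub_zero, Nat.choose_zero_right, Nat.add_sub_cancel,
      mul_left_comm, X_mul_pochDiff_zero_add_swap]
    push_cast
    simp only [map_mul, map_neg, map_add, map_sub, map_one, map_natCast]
    ring
  · refine sum_congr rfl fun k hk => ?_
    simp only [mem_Icc] at hk
    rw [mul_left_comm, X_mul_pochDiff_folded (n + 1) k hk.1 (by omega)]

theorem P_coeff_formula_general
    (n : ℕ) (f : ℕ → ℝ) :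
    ∀ m, 1 ≤ m → m ≤ n - 2 →
      (Ppoly n f).coeff m =
        -((n : ℝ) * ((n : ℝ) - 1)) * Stir (n - 1) (m + 1) * (f 0 * f n) +
          ∑ k ∈ Finset.Icc 1 (n / 2),
            f k * f (n - k) * (n.choose k : ℝ) *
              ∑ i ∈ Finset.range (m + 1),
                Stir (k - 1) i *
                  (Bcoef n k * Stir (n - k - 1) (m - i + 1) -
                    Acoef n k * Stir (n - k - 1) (m - i)) := by
  intro m _ hm2
  rw [← coeff_X_mul, X_mul_Ppoly, coeff_add, coeff_C_mul, finsetSum_coeff, Stir]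
  congr 1
  · ring
  · refine sum_congr rfl fun k hk => ?_
    have hconst : (ascPochhammer ℝ (n - k - 1)).coeff 0 = 0 := by
      rw [coeff_zero_eq_eval_zero, ascPochhammer_ne_zero_eval_zero]
      simp only [mem_Icc] at hk
      omega
    rw [coeff_C_mul, coeff_mul_mul_C_sub_C_mul_X_succ _ _ hconst]
    rfl

theorem P_coeff_formula
    (n : ℕ) (hn : 3 ≤ n) (f : ℕ → ℝ) :
    ∀ m, 1 ≤ m → m ≤ n - 2 →
      (Ppoly n f).coeff m =
        -((n : ℝ) * ((n : ℝ) - 1)) * Stir (n - 1) (m + 1) * (f 0 * f n) +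
          ∑ k ∈ Finset.Icc 1 (n / 2),
            f k * f (n - k) * (n.choose k : ℝ) *
              ∑ i ∈ Finset.range (m + 1),
                Stir (k - 1) i *
                  (Bcoef n k * Stir (n - k - 1) (m - i + 1) -
                    Acoef n k * Stir (n - k - 1) (m - i)) :=
  P_coeff_formula_general n f
end
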